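/- Assume d ≥ 2 and Tr(1 − Θ(1)) < ∞. Then both limits lim_{k→∞} Tr(1 − Θ^k(1))/(Σ_{j=0}^{k−1} d^j) and lim_{k→∞} (d−1)·Tr(1 − Θ^k(1))/d^k exist as finite real numbers and are equal. -/

import Mathlib

open Filter Finset ContinuousLinearMap
open scoped ENNReal

/-- The trace (in `[0,∞]`) of an operator on a complex Hilbert space, computed in a
Hilbert (orthonormal) basis `b`: `Tr A = ∑ᵢ ⟨bᵢ, A bᵢ⟩` (real part, clamped to `[0,∞]`).
For a positive operator this is the usual trace, independent of the choice of basis. -/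
noncomputable def opTrace {H : Type*} [NormedAddCommGroup H] [InnerProductSpace ℂ H]
    [CompleteSpace H] {ι : Type*} (b : HilbertBasis ι ℂ H) (A : H →L[ℂ] H) : ℝ≥0∞ :=
  ∑' i, ENNReal.ofReal (inner ℂ (b i) (A (b i)) : ℂ).re

/-!
Put `D_j = Θ^j(1 - Θ(1)) ≥ 0`; then `1 - Θ^k(1) = ∑_{j<k} D_j` telescopes, so
`Tr(1 - Θ^k(1)) = ∑_{j<k} c_j` with `c_j = Tr D_j`. Because `span{tᵢ}` has dimension `d`,
`∑ᵢ ‖tᵢ ξ‖² ≤ d ‖ξ‖²`, hence `Tr Θ(X) ≤ d Tr X` for `X ≥ 0` and `c_{j+1} ≤ d c_j`. So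
`γ_j = c_j / d^j` decreases to a limit `L`, and both expressions are weighted means of the `γ_j`
with weights proportional to `d^j` (Stolz–Cesàro); they therefore tend to `L`.
-/

open scoped InnerProductSpace InnerProduct Topology

section Kraus

variable {𝕜 H κ : Type*} [RCLike 𝕜] [NormedAddCommGroup H] [InnerProductSpace 𝕜 H]
  [CompleteSpace H] [Fintype κ] {t : κ → H →L[𝕜] H}

theorem sum_norm_adjoint_apply_sq_le (ht : ∑ i, t i * star (t i) ≤ 1) (u : H) :
    ∑ i, ‖((t i)†) u‖ ^ 2 ≤ ‖u‖ ^ 2 := by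
  have hnorm (i : κ) : ‖((t i)†) u‖ ^ 2 = RCLike.re ⟪u, (t i * star (t i)) u⟫_𝕜 := by
    simpa [star_eq_adjoint] using apply_norm_sq_eq_inner_adjoint_right ((t i)†) u
  have hpos := (le_def _ _ |>.mp ht).re_inner_nonneg_right u
  rw [sub_apply, inner_sub_right, map_sub, _root_.sum_apply, inner_sum, map_sum,
    one_apply_eq_self, inner_self_eq_norm_sq] at hpos
  simp_rw [← hnorm] at hpos
  linarith

theorem sum_norm_inner_apply_sq_le (ht : ∑ i, t i * star (t i) ≤ 1) (u ξ : H) :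
    ∑ i, ‖⟪u, t i ξ⟫_𝕜‖ ^ 2 ≤ ‖u‖ ^ 2 * ‖ξ‖ ^ 2 :=
  calc ∑ i, ‖⟪u, t i ξ⟫_𝕜‖ ^ 2 = ∑ i, ‖⟪((t i)†) u, ξ⟫_𝕜‖ ^ 2 := by simp [adjoint_inner_left]
    _ ≤ ∑ i, ‖((t i)†) u‖ ^ 2 * ‖ξ‖ ^ 2 := by
      gcongr with i
      rw [← mul_pow]
      exact pow_le_pow_left₀ (norm_nonneg _) (norm_inner_le_norm _ _) 2
    _ ≤ ‖u‖ ^ 2 * ‖ξ‖ ^ 2 := by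
      rw [← sum_mul]
      gcongr
      exact sum_norm_adjoint_apply_sq_le ht u

/-- The vectors `t i ξ` lie in the image `K` of `span (range t)` under evaluation at `ξ`; in an
orthonormal basis `(e p)` of `K`, each `e p` contributes at most `‖ξ‖²`. -/
theorem sum_norm_apply_sq_le_finrank_mul (ht : ∑ i, t i * star (t i) ≤ 1) (ξ : H) :
    ∑ i, ‖t i ξ‖ ^ 2 ≤ Module.finrank 𝕜 (Submodule.span 𝕜 (Set.range t)) * ‖ξ‖ ^ 2 := by
  set V := Submodule.span 𝕜 (Set.range t)
  have : FiniteDimensional 𝕜 V := FiniteDimensional.span_of_finite 𝕜 (Set.finite_range t)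
  set K := V.map (apply 𝕜 H ξ : (H →L[𝕜] H) →ₗ[𝕜] H)
  have hK : Module.finrank 𝕜 K ≤ Module.finrank 𝕜 V := Submodule.finrank_map_le _ _
  have hmem (i : κ) : t i ξ ∈ K := Submodule.mem_map_of_mem (Submodule.subset_span ⟨i, rfl⟩)
  set e := stdOrthonormalBasis 𝕜 K
  calc ∑ i, ‖t i ξ‖ ^ 2 = ∑ i, ∑ p, ‖⟪(e p : H), t i ξ⟫_𝕜‖ ^ 2 := by
        refine sum_congr rfl fun i _ ↦ ?_
        simpa using (e.sum_sq_norm_inner_right ⟨t i ξ, hmem i⟩).symm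
    _ = ∑ p, ∑ i, ‖⟪(e p : H), t i ξ⟫_𝕜‖ ^ 2 := sum_comm
    _ ≤ ∑ p, ‖(e p : H)‖ ^ 2 * ‖ξ‖ ^ 2 := by
        gcongr with p
        exact sum_norm_inner_apply_sq_le ht _ ξ
    _ = Module.finrank 𝕜 K * ‖ξ‖ ^ 2 := by simp [Submodule.norm_coe, e.norm_eq_one]
    _ ≤ Module.finrank 𝕜 V * ‖ξ‖ ^ 2 := by gcongr

end Kraus

theorem HilbertBasis.tsum_ofReal_norm_inner_sq {𝕜 E ι : Type*} [RCLike 𝕜]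
    [NormedAddCommGroup E] [InnerProductSpace 𝕜 E] (b : HilbertBasis ι 𝕜 E) (x : E) :
    ∑' i, ENNReal.ofReal (‖⟪b i, x⟫_𝕜‖ ^ 2) = ENNReal.ofReal (‖x‖ ^ 2) := by
  have h : HasSum (fun i ↦ ‖⟪b i, x⟫_𝕜‖ ^ 2) (‖x‖ ^ 2) := by
    have h := (b.hasSum_inner_mul_inner x x).mapL (RCLike.reCLM (K := 𝕜))
    simp only [RCLike.reCLM_apply, inner_mul_symm_re_eq_norm, norm_mul, inner_self_eq_norm_sq,
      norm_inner_symm x] at h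
    simpa only [sq] using h
  rw [← h.tsum_eq, ENNReal.ofReal_tsum_of_nonneg (fun i ↦ by positivity) h.summable]

section Trace

variable {H ι : Type*} [NormedAddCommGroup H] [InnerProductSpace ℂ H] [CompleteSpace H]
  (b : HilbertBasis ι ℂ H)

theorem opTrace_sum {κ : Type*} (s : Finset κ) {f : κ → H →L[ℂ] H} (hf : ∀ i ∈ s, 0 ≤ f i) :
    opTrace b (∑ i ∈ s, f i) = ∑ i ∈ s, opTrace b (f i) := by
  have hre (i : κ) (hi : i ∈ s) (x : H) : 0 ≤ (⟪x, f i x⟫_ℂ).re :=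
    ((nonneg_iff_isPositive _).mp (hf i hi)).re_inner_nonneg_right x
  simp_rw [opTrace, _root_.sum_apply, inner_sum, Complex.re_sum,
    ENNReal.ofReal_sum_of_nonneg fun i hi ↦ hre i hi _]
  exact Summable.tsum_finsetSum fun _ _ ↦ ENNReal.summable

theorem opTrace_star_mul_self (A : H →L[ℂ] H) :
    opTrace b (star A * A) = ∑' i, ENNReal.ofReal (‖A (b i)‖ ^ 2) := by
  simp_rw [opTrace, apply_norm_sq_eq_inner_adjoint_right, star_eq_adjoint]
  rfl

theorem opTrace_mul_star_self (A : H →L[ℂ] H) :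
    opTrace b (A * star A) = opTrace b (star A * A) := by
  calc opTrace b (A * star A) = opTrace b (star (star A) * star A) := by rw [star_star]
    _ = ∑' i, ∑' j, ENNReal.ofReal (‖⟪b j, (A†) (b i)⟫_ℂ‖ ^ 2) := by
      simp_rw [opTrace_star_mul_self, b.tsum_ofReal_norm_inner_sq, star_eq_adjoint]
    _ = ∑' j, ∑' i, ENNReal.ofReal (‖⟪b i, A (b j)⟫_ℂ‖ ^ 2) := by
      rw [ENNReal.tsum_comm]
      simp_rw [adjoint_inner_right, norm_inner_symm]
    _ = opTrace b (star A * A) := by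
      simp_rw [opTrace_star_mul_self, b.tsum_ofReal_norm_inner_sq]

theorem opTrace_sum_mul_mul_star_le {κ : Type*} [Fintype κ] (t : κ → H →L[ℂ] H) {C : ℝ}
    (hC : ∀ ξ, ∑ i, ‖t i ξ‖ ^ 2 ≤ C * ‖ξ‖ ^ 2) {X : H →L[ℂ] H} (hX : 0 ≤ X) :
    opTrace b (∑ i, t i * X * star (t i)) ≤ ENNReal.ofReal C * opTrace b X := by
  obtain ⟨R, rfl⟩ : ∃ R : H →L[ℂ] H, X = R * star R := by
    obtain ⟨S, rfl⟩ := CStarAlgebra.nonneg_iff_eq_star_mul_self.mp hX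
    exact ⟨star S, by rw [star_star]⟩
  calc opTrace b (∑ i, t i * (R * star R) * star (t i))
      = ∑ i, opTrace b (star (t i * R) * (t i * R)) := by
        rw [opTrace_sum b _ fun i _ ↦ star_right_conjugate_nonneg hX (t i)]
        refine sum_congr rfl fun i _ ↦ ?_
        rw [← opTrace_mul_star_self, star_mul, mul_assoc, mul_assoc, mul_assoc]
    _ = ∑' j, ENNReal.ofReal (∑ i, ‖t i (R (b j))‖ ^ 2) := by
        simp_rw [opTrace_star_mul_self, mul_apply_eq_comp]
        rw [← Summable.tsum_finsetSum fun _ _ ↦ ENNReal.summable]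
        simp_rw [ENNReal.ofReal_sum_of_nonneg fun i _ ↦ sq_nonneg ‖t i (R (b _))‖]
    _ ≤ ∑' j, ENNReal.ofReal C * ENNReal.ofReal (‖R (b j)‖ ^ 2) := by
        gcongr with j
        rw [← ENNReal.ofReal_mul' (sq_nonneg _)]
        exact ENNReal.ofReal_le_ofReal (hC _)
    _ = ENNReal.ofReal C * opTrace b (R * star R) := by
        rw [ENNReal.tsum_mul_left, opTrace_mul_star_self, opTrace_star_mul_self]

end Trace

theorem sub_iterate_eq_sum_iterate_sub {G : Type*} [AddCommGroup G] (f : G →+ G) (x : G)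
    (k : ℕ) : x - f^[k] x = ∑ j ∈ range k, f^[j] (x - f x) := by
  simp_rw [iterate_map_sub, ← Function.iterate_succ_apply]
  exact (sum_range_sub' (fun j ↦ f^[j] x) k).symm

section KrausMap

variable {H ι κ : Type*} [NormedAddCommGroup H] [InnerProductSpace ℂ H] [CompleteSpace H]
  [Fintype κ]

@[simps]
noncomputable def krausMap (t : κ → H →L[ℂ] H) : (H →L[ℂ] H) →+ (H →L[ℂ] H) where
  toFun x := ∑ i, t i * x * star (t i)
  map_zero' := by simp
  map_add' x y := by simp [mul_add, add_mul, sum_add_distrib]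

variable {t : κ → H →L[ℂ] H}

theorem krausMap_nonneg {x : H →L[ℂ] H} (hx : 0 ≤ x) : 0 ≤ krausMap t x :=
  sum_nonneg fun i _ ↦ star_right_conjugate_nonneg hx (t i)

theorem opTrace_krausMap_le (b : HilbertBasis ι ℂ H) (ht : ∑ i, t i * star (t i) ≤ 1)
    {X : H →L[ℂ] H} (hX : 0 ≤ X) :
    opTrace b (krausMap t X) ≤ Module.finrank ℂ (Submodule.span ℂ (Set.range t)) * opTrace b X := by
  simpa using opTrace_sum_mul_mul_star_le b t (sum_norm_apply_sq_le_finrank_mul ht) hX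

end KrausMap

theorem Filter.Tendsto.sum_mul_div_sum {u w : ℕ → ℝ} {l : ℝ} (hu : Tendsto u atTop (𝓝 l))
    (hw : 0 ≤ w) (hW : Tendsto (fun k ↦ ∑ j ∈ range k, w j) atTop atTop) :
    Tendsto (fun k ↦ (∑ j ∈ range k, u j * w j) / ∑ j ∈ range k, w j) atTop (𝓝 l) := by
  have hlittle : (fun j ↦ (u j - l) * w j) =o[atTop] w := by
    simpa using ((Asymptotics.isLittleO_one_iff ℝ).2 (tendsto_sub_nhds_zero_iff.2 hu)).mul_isBigO
      (Asymptotics.isBigO_refl w atTop)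
  rw [← tendsto_sub_nhds_zero_iff]
  refine (hlittle.sum_range hw hW).tendsto_div_nhds_zero.congr' ?_
  filter_upwards [hW.eventually_gt_atTop 0] with k hk
  simp only [sub_mul, sum_sub_distrib, ← mul_sum]
  field_simp

theorem Filter.Tendsto.sum_mul_pow_div_geom_sum {u : ℕ → ℝ} {l d : ℝ}
    (hu : Tendsto u atTop (𝓝 l)) (hd : 1 < d) :
    Tendsto (fun k ↦ (∑ j ∈ range k, u j * d ^ j) / ∑ j ∈ range k, d ^ j) atTop (𝓝 l) := by
  refine hu.sum_mul_div_sum (fun j ↦ by positivity) (tendsto_atTop_mono (fun k ↦ ?_)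
    tendsto_natCast_atTop_atTop)
  simpa using card_nsmul_le_sum (range k) (d ^ ·) 1 fun j _ ↦ one_le_pow₀ hd.le

theorem Filter.Tendsto.sub_one_mul_sum_mul_pow_div_pow {u : ℕ → ℝ} {l d : ℝ}
    (hu : Tendsto u atTop (𝓝 l)) (hd : 1 < d) :
    Tendsto (fun k ↦ (d - 1) * (∑ j ∈ range k, u j * d ^ j) / d ^ k) atTop (𝓝 l) := by
  have hpow : Tendsto (fun k : ℕ ↦ 1 - d⁻¹ ^ k) atTop (𝓝 1) := by
    simpa using tendsto_const_nhds.sub (tendsto_pow_atTop_nhds_zero_of_lt_one (by positivity)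
      (inv_lt_one_of_one_lt₀ hd))
  simpa using ((hu.sum_mul_pow_div_geom_sum hd).mul hpow).congr' <|
    (eventually_gt_atTop 0).mono fun k hk ↦ by
      have hS : 0 < ∑ j ∈ range k, d ^ j :=
        sum_pos (fun j _ ↦ by positivity) (nonempty_range_iff.2 hk.ne')
      have hinv : d⁻¹ ^ k * d ^ k = 1 := by
        rw [← mul_pow, inv_mul_cancel₀ (by positivity), one_pow]
      field_simp
      linear_combination (-∑ j ∈ range k, u j * d ^ j) * (geom_sum_mul d k + hinv)

theorem ENNReal.exists_tendsto_sum_div_geom_sum {c : ℕ → ℝ≥0∞} {d : ℕ} (hd : 2 ≤ d)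
    (h0 : c 0 ≠ ∞) (hc : ∀ j, c (j + 1) ≤ d * c j) :
    ∃ K : ℝ≥0∞, K ≠ ∞ ∧
      Tendsto (fun k ↦ (∑ j ∈ range k, c j) / ∑ j ∈ range k, (d : ℝ≥0∞) ^ j) atTop (𝓝 K) ∧
      Tendsto (fun k ↦ ((d : ℝ≥0∞) - 1) * (∑ j ∈ range k, c j) / (d : ℝ≥0∞) ^ k) atTop
        (𝓝 K) := by
  have hd' : (1 : ℝ) < d := by exact_mod_cast hd
  have hfin (j : ℕ) : c j ≠ ∞ := by
    induction j with
    | zero => exact h0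
    | succ j ih => exact ne_top_of_le_ne_top (mul_ne_top (natCast_ne_top d) ih) (hc j)
  set γ : ℕ → ℝ := fun j ↦ (c j).toReal / d ^ j
  have hγ_nonneg (j : ℕ) : 0 ≤ γ j := by positivity
  have hγ_anti : Antitone γ := antitone_nat_of_succ_le fun j ↦ by
    have := toReal_mono (mul_ne_top (natCast_ne_top d) (hfin j)) (hc j)
    rw [toReal_mul, toReal_natCast] at this
    rw [div_le_div_iff₀ (by positivity) (by positivity), pow_succ]
    nlinarith [pow_pos (zero_lt_one.trans hd') j]
  have hγ_lim := tendsto_atTop_ciInf hγ_anti ⟨0, Set.forall_mem_range.2 hγ_nonneg⟩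
  have hc_eq (j : ℕ) : c j = ENNReal.ofReal (γ j * d ^ j) := by
    rw [div_mul_cancel₀ _ (by positivity), ofReal_toReal (hfin j)]
  have hsum_eq (k : ℕ) : ∑ j ∈ range k, c j = ENNReal.ofReal (∑ j ∈ range k, γ j * d ^ j) := by
    rw [ofReal_sum_of_nonneg fun j _ ↦ by positivity]
    exact sum_congr rfl fun j _ ↦ hc_eq j
  refine ⟨ENNReal.ofReal (⨅ j, γ j), ofReal_ne_top, ?_, ?_⟩
  · refine (ENNReal.tendsto_ofReal (hγ_lim.sum_mul_pow_div_geom_sum hd')).congr' <|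
      (eventually_gt_atTop 0).mono fun k hk ↦ ?_
    rw [ofReal_div_of_pos (sum_pos (fun j _ ↦ by positivity) (nonempty_range_iff.2 hk.ne')),
      ← hsum_eq, ofReal_sum_of_nonneg fun j _ ↦ by positivity]
    simp [ofReal_pow]
  · refine (ENNReal.tendsto_ofReal (hγ_lim.sub_one_mul_sum_mul_pow_div_pow hd')).congr fun k ↦ ?_
    rw [ofReal_div_of_pos (by positivity), ofReal_mul (by linarith), ← hsum_eq,
      ofReal_sub _ zero_le_one]
    simp [ofReal_pow]

/-- When `d ≥ 2` and `Tr(1 - Θ(1)) < ∞`, both `Tr(1 - Θ^k(1)) / ∑_{j<k} d^j` and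
Kribs's expression `(d - 1) * Tr(1 - Θ^k(1)) / d^k` converge to the same finite limit. -/
theorem curvature_eq_kribs_curvature
    {H : Type*} [NormedAddCommGroup H] [InnerProductSpace ℂ H] [CompleteSpace H]
    {ι : Type*} (b : HilbertBasis ι ℂ H)
    (n : ℕ) (t : Fin n → H →L[ℂ] H)
    (hcontr : ∑ i, t i * star (t i) ≤ 1)
    (Θ : (H →L[ℂ] H) → (H →L[ℂ] H))
    (hΘ : ∀ x, Θ x = ∑ i, t i * x * star (t i))
    (d : ℕ) (hd : d = Module.finrank ℂ (Submodule.span ℂ (Set.range t)))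
    (hd2 : 2 ≤ d)
    (hfin : opTrace b (1 - Θ 1) ≠ ⊤) :
    ∃ K : ℝ≥0∞, K ≠ ⊤ ∧
      Filter.Tendsto
        (fun k => opTrace b (1 - Θ^[k] 1) / ∑ j ∈ Finset.range k, (d : ℝ≥0∞) ^ j)
        Filter.atTop (nhds K) ∧
      Filter.Tendsto
        (fun k => ((d : ℝ≥0∞) - 1) * opTrace b (1 - Θ^[k] 1) / (d : ℝ≥0∞) ^ k)
        Filter.atTop (nhds K) := by
  obtain rfl : Θ = krausMap t := funext hΘ
  have hnonneg (j : ℕ) : 0 ≤ (krausMap t)^[j] (1 - krausMap t 1) :=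
    Function.Iterate.rec _ (sub_nonneg.2 (by simpa using hcontr)) (fun _ ↦ krausMap_nonneg) j
  have htrace (k : ℕ) : opTrace b (1 - (krausMap t)^[k] 1) =
      ∑ j ∈ range k, opTrace b ((krausMap t)^[j] (1 - krausMap t 1)) := by
    rw [sub_iterate_eq_sum_iterate_sub, opTrace_sum b _ fun j _ ↦ hnonneg j]
  simp_rw [htrace]
  refine ENNReal.exists_tendsto_sum_div_geom_sum
    (c := fun j ↦ opTrace b ((krausMap t)^[j] (1 - krausMap t 1))) hd2 hfin fun j ↦ ?_
  rw [Function.iterate_succ_apply', hd]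
  exact opTrace_krausMap_le b hcontr (hnonneg j)
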